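/- Suppose φ is a C³ function on [x_l, x_r] satisfying φ''' + F_0 φ'' + F_0'' φ = r with φ(x_l) = φ'(x_l) = φ''(x_l) = 0, where F_0 ≥ 0 and F_0'' ≥ 0 on [x_l, x_r]. Then sup_{x ∈ [x_l, x_r]} |φ''(x)| ≤ (x_r − x_l)^{1/2} · sup_{[x_l,x_r]} |r| · exp( (1/2) ∫_{x_l}^{x_r} Q(y) dy ), where Q(x) = F_0''(x) − 2F_0(x) + 1 + ((x−x_l)^4/4) F_0''(x) when F_0'' − 2F_0 + 1 ≥ 0, and Q(x) = ((x−x_l)^4/4) F_0''(x) otherwise. -/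

import Mathlib

/-!
With `E = φ''²`, the equation `φ''' = r - F₀ φ'' - F₀'' φ` and `F₀'' ≥ 0` give
`E' ≤ (F₀'' - 2F₀ + 1) E + r² + F₀'' φ²`, while the vanishing initial data give
`φ(x)² ≤ (x - x_l)⁴ / 4 · sup_{[x_l, x]} E`. The latter term depends on the past of `E`, so
instead of Grönwall's lemma we compare `E` with the increasing function
`u_ε = (ε + (sup r² + ε)(x - x_l)) exp (∫ Q)`, which satisfies `u_ε' > Q u_ε + sup r²`:
at a first point where `E` reaches `u_ε` we would have `E ≤ u_ε` on the past, hence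
`E' ≤ Q u_ε + sup r² < u_ε'`, which is impossible. Letting `ε → 0` gives
`E ≤ sup r² · (x_r - x_l) · exp (∫ Q)`.
-/

open Set intervalIntegral Filter Topology

theorem HasDerivWithinAt.nonneg_of_isMaxOn_Icc {g : ℝ → ℝ} {g' a t : ℝ} (hat : a < t)
    (hmax : IsMaxOn g (Icc a t) t) (hg : HasDerivWithinAt g g' (Icc a t) t) : 0 ≤ g' := by
  have hcone : a - t ∈ posTangentConeAt (Icc a t) t :=
    sub_mem_posTangentConeAt_of_segment_subset ((convex_Icc a t).segment_subset
      (right_mem_Icc.2 hat.le) (left_mem_Icc.2 hat.le))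
  have h := hmax.localize.hasFDerivWithinAt_nonpos hg hcone
  simp only [ContinuousLinearMap.toSpanSingleton_apply, smul_eq_mul] at h
  exact nonneg_of_mul_nonpos_right h (sub_neg.2 hat)

/-- Unlike `image_le_of_deriv_right_lt_deriv_boundary`, the derivative inequality at `x` may use
that `f ≤ B` on all of `[a, x]`; this is why the argument runs with left derivatives, at the first
point where `f` reaches `B`. -/
theorem image_lt_of_deriv_left_lt_deriv_boundary {f f' B B' : ℝ → ℝ} {a b : ℝ}
    (hf : ContinuousOn f (Icc a b)) (hf' : ∀ x ∈ Ioc a b, HasDerivWithinAt f (f' x) (Icc a x) x)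
    (hB : ContinuousOn B (Icc a b)) (hB' : ∀ x ∈ Ioc a b, HasDerivWithinAt B (B' x) (Icc a x) x)
    (ha : f a < B a)
    (bound : ∀ x ∈ Ioc a b, (∀ y ∈ Icc a x, f y ≤ B y) → f x = B x → f' x < B' x) :
    ∀ x ∈ Icc a b, f x < B x := by
  intro x₀ hx₀
  by_contra! hcross
  have hsub : Icc a x₀ ⊆ Icc a b := Icc_subset_Icc_right hx₀.2
  set T := {x ∈ Icc a x₀ | B x ≤ f x}
  have hT : IsClosed T := isClosed_Icc.isClosed_le (hB.mono hsub) (hf.mono hsub)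
  have hTbdd : BddBelow T := ⟨a, fun y hy => hy.1.1⟩
  set t := sInf T
  have htT : t ∈ T := hT.csInf_mem ⟨x₀, right_mem_Icc.2 hx₀.1, hcross⟩ hTbdd
  have htb : t ≤ b := htT.1.2.trans hx₀.2
  have hat : a < t := htT.1.1.lt_of_ne fun hta => (ha.trans_le (hta ▸ htT.2)).false
  have hbefore : ∀ y ∈ Ico a t, f y ≤ B y := fun y hy => by
    by_contra! h
    exact (csInf_le hTbdd ⟨⟨hy.1, hy.2.le.trans htT.1.2⟩, h.le⟩).not_gt hy.2
  have hsubt : Icc a t ⊆ Icc a b := Icc_subset_Icc_right htb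
  have hhist : ∀ y ∈ Icc a t, f y ≤ B y := by
    rw [← closure_Ico hat.ne]
    exact le_on_closure hbefore ((closure_Ico hat.ne).symm ▸ hf.mono hsubt)
      ((closure_Ico hat.ne).symm ▸ hB.mono hsubt)
  have heq : f t = B t := le_antisymm (hhist t (right_mem_Icc.2 hat.le)) htT.2
  have hmax : IsMaxOn (fun y => f y - B y) (Icc a t) t := isMaxOn_iff.2 fun y hy => by
    simpa only [heq, sub_self, sub_nonpos] using hhist y hy
  have hderiv := ((hf' t ⟨hat, htb⟩).sub (hB' t ⟨hat, htb⟩)).nonneg_of_isMaxOn_Icc hat hmax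
  exact (bound t ⟨hat, htb⟩ hhist heq).not_ge (sub_nonneg.1 hderiv)

theorem ContinuousOn.hasDerivWithinAt_integral_Icc {f : ℝ → ℝ} {a b x : ℝ}
    (hf : ContinuousOn f (Icc a b)) (hx : x ∈ Icc a b) :
    HasDerivWithinAt (fun u => ∫ y in a..u, f y) (f x) (Icc a b) x := by
  have : Fact (x ∈ Icc a b) := ⟨hx⟩
  refine integral_hasDerivWithinAt_right ?_ (hf.stronglyMeasurableAtFilter_nhdsWithin
    measurableSet_Icc x) (hf x hx)
  exact (hf.mono (uIcc_subset_Icc (left_mem_Icc.2 (hx.1.trans hx.2)) hx)).intervalIntegrable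

theorem ContinuousOn.monotoneOn_integral_Icc {f : ℝ → ℝ} {a b : ℝ}
    (hf : ContinuousOn f (Icc a b)) (hf0 : ∀ x ∈ Icc a b, 0 ≤ f x) :
    MonotoneOn (fun u => ∫ y in a..u, f y) (Icc a b) := by
  refine monotoneOn_of_hasDerivWithinAt_nonneg (f' := f) (convex_Icc a b)
    (fun x hx => (hf.hasDerivWithinAt_integral_Icc hx).continuousWithinAt)
    (fun x hx => (hf.hasDerivWithinAt_integral_Icc (interior_subset hx)).mono interior_subset)
    (fun x hx => hf0 x (interior_subset hx))

theorem abs_le_of_abs_deriv_deriv_le {f f₁ f₂ : ℝ → ℝ} {a b m : ℝ}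
    (hf : ∀ x ∈ Icc a b, HasDerivWithinAt f (f₁ x) (Icc a b) x)
    (hf₁ : ∀ x ∈ Icc a b, HasDerivWithinAt f₁ (f₂ x) (Icc a b) x)
    (h0 : f a = 0) (h1 : f₁ a = 0) (hm : ∀ x ∈ Icc a b, |f₂ x| ≤ m) :
    ∀ x ∈ Icc a b, |f x| ≤ m * (x - a) ^ 2 / 2 := by
  have right {g g' : ℝ → ℝ} (hg : ∀ x ∈ Icc a b, HasDerivWithinAt g (g' x) (Icc a b) x) :
      ∀ x ∈ Ico a b, HasDerivWithinAt g (g' x) (Ici x) x := fun x hx =>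
    (hg x (Ico_subset_Icc_self hx)).mono_of_mem_nhdsWithin (Icc_mem_nhdsGE_of_mem hx)
  have cont {g g' : ℝ → ℝ} (hg : ∀ x ∈ Icc a b, HasDerivWithinAt g (g' x) (Icc a b) x) :
      ContinuousOn g (Icc a b) := fun x hx => (hg x hx).continuousWithinAt
  have hf₁bound : ∀ x ∈ Icc a b, |f₁ x| ≤ m * (x - a) := by
    refine image_norm_le_of_norm_deriv_right_le_deriv_boundary (cont hf₁) (right hf₁)
      (by simp [h1]) (fun x => ((hasDerivAt_id x).sub_const a).const_mul m) ?_
    simpa using fun x hx => hm x (Ico_subset_Icc_self hx)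
  refine image_norm_le_of_norm_deriv_right_le_deriv_boundary (cont hf) (right hf) (by simp [h0])
    (fun x => (((hasDerivAt_id x).sub_const a).pow 2).const_mul m |>.div_const 2) fun x hx => ?_
  have := hf₁bound x (Ico_subset_Icc_self hx)
  simp only [Real.norm_eq_abs, id]
  linarith

theorem ContDiff.hasDerivAt_iterate_deriv {f : ℝ → ℝ} {n k : ℕ} (hf : ContDiff ℝ n f)
    (hk : k < n) (x : ℝ) : HasDerivAt (deriv^[k] f) (deriv^[k + 1] f x) x := by
  rw [Function.iterate_succ_apply', ← iteratedDeriv_eq_iterate]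
  exact (hf.differentiable_iteratedDeriv k (by exact_mod_cast hk) x).hasDerivAt

/-- The growth rate of `φ''²`: the positive part of `q - 2p + 1` comes from the terms in `φ''`,
and `(x - a)⁴ / 4 · q` from the term `q φ`, since `|φ(x)| ≤ (x - a)² / 2 · sup |φ''|`. -/
noncomputable def energyRate (p q : ℝ → ℝ) (a x : ℝ) : ℝ :=
  max (q x - 2 * p x + 1) 0 + (x - a) ^ 4 / 4 * q x

theorem energyRate_eq_ite (p q : ℝ → ℝ) (a x : ℝ) :
    energyRate p q a x = if q x - 2 * p x + 1 ≥ 0 then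
      q x - 2 * p x + 1 + (x - a) ^ 4 / 4 * q x else (x - a) ^ 4 / 4 * q x := by
  split_ifs with h
  · rw [energyRate, max_eq_left h]
  · rw [energyRate, max_eq_right (not_le.1 h).le, zero_add]

theorem energyRate_nonneg {p q : ℝ → ℝ} {a x : ℝ} (hq : 0 ≤ q x) : 0 ≤ energyRate p q a x := by
  unfold energyRate
  positivity

theorem ContinuousOn.energyRate {p q : ℝ → ℝ} {s : Set ℝ} (hp : ContinuousOn p s)
    (hq : ContinuousOn q s) (a : ℝ) : ContinuousOn (energyRate p q a) s := by
  unfold _root_.energyRate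
  fun_prop

theorem two_mul_mul_le_of_abs_le {ψ ψ' φ p q S : ℝ} (hq : 0 ≤ q)
    (hS : |ψ' + p * ψ + q * φ| ≤ S) :
    2 * ψ * ψ' ≤ (q - 2 * p + 1) * ψ ^ 2 + S ^ 2 + q * φ ^ 2 := by
  have hρ : (ψ' + p * ψ + q * φ) ^ 2 ≤ S ^ 2 := sq_le_sq' (neg_le_of_abs_le hS) (le_of_abs_le hS)
  nlinarith [sq_nonneg (ψ - (ψ' + p * ψ + q * φ)), mul_nonneg hq (sq_nonneg (ψ + φ))]

section ThirdOrder

variable {φ φ₁ φ₂ φ₃ p q : ℝ → ℝ} {a b S : ℝ}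

theorem two_mul_mul_le_energyRate_mul
    (hφ : ∀ x ∈ Icc a b, HasDerivWithinAt φ (φ₁ x) (Icc a b) x)
    (hφ₁ : ∀ x ∈ Icc a b, HasDerivWithinAt φ₁ (φ₂ x) (Icc a b) x)
    (hq0 : ∀ x ∈ Icc a b, 0 ≤ q x)
    (hS : ∀ x ∈ Icc a b, |φ₃ x + p x * φ₂ x + q x * φ x| ≤ S)
    (h0 : φ a = 0) (h1 : φ₁ a = 0) {x M : ℝ} (hx : x ∈ Icc a b)
    (hM : ∀ y ∈ Icc a x, φ₂ y ^ 2 ≤ M) :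
    2 * φ₂ x * φ₃ x ≤ energyRate p q a x * M + S ^ 2 := by
  have hsub : Icc a x ⊆ Icc a b := Icc_subset_Icc_right hx.2
  have hxx : x ∈ Icc a x := right_mem_Icc.2 hx.1
  have hM0 : 0 ≤ M := (sq_nonneg _).trans (hM x hxx)
  have hφx : |φ x| ≤ √M * (x - a) ^ 2 / 2 :=
    abs_le_of_abs_deriv_deriv_le (fun y hy => (hφ y (hsub hy)).mono hsub)
      (fun y hy => (hφ₁ y (hsub hy)).mono hsub) h0 h1
      (fun y hy => Real.abs_le_sqrt (hM y hy)) x hxx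
  have hφsq : φ x ^ 2 ≤ (x - a) ^ 4 / 4 * M := by
    calc φ x ^ 2 ≤ (√M * (x - a) ^ 2 / 2) ^ 2 :=
          sq_le_sq' (neg_le_of_abs_le hφx) (le_of_abs_le hφx)
      _ = (x - a) ^ 4 / 4 * M := by rw [div_pow, mul_pow, Real.sq_sqrt hM0]; ring
  have hmax : (q x - 2 * p x + 1) * φ₂ x ^ 2 ≤ max (q x - 2 * p x + 1) 0 * M :=
    (mul_le_mul_of_nonneg_right (le_max_left _ _) (sq_nonneg _)).trans
      (mul_le_mul_of_nonneg_left (hM x hxx) (le_max_right _ _))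
  have hqφ : q x * φ x ^ 2 ≤ q x * ((x - a) ^ 4 / 4 * M) :=
    mul_le_mul_of_nonneg_left hφsq (hq0 x hx)
  calc 2 * φ₂ x * φ₃ x ≤ (q x - 2 * p x + 1) * φ₂ x ^ 2 + S ^ 2 + q x * φ x ^ 2 :=
        two_mul_mul_le_of_abs_le (hq0 x hx) (hS x hx)
    _ ≤ energyRate p q a x * M + S ^ 2 := by
        rw [energyRate]
        linear_combination hmax + hqφ

theorem sq_lt_energy_comparison {ε : ℝ}
    (hφ : ∀ x ∈ Icc a b, HasDerivWithinAt φ (φ₁ x) (Icc a b) x)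
    (hφ₁ : ∀ x ∈ Icc a b, HasDerivWithinAt φ₁ (φ₂ x) (Icc a b) x)
    (hφ₂ : ∀ x ∈ Icc a b, HasDerivWithinAt φ₂ (φ₃ x) (Icc a b) x)
    (hp : ContinuousOn p (Icc a b)) (hq : ContinuousOn q (Icc a b))
    (hq0 : ∀ x ∈ Icc a b, 0 ≤ q x)
    (hS : ∀ x ∈ Icc a b, |φ₃ x + p x * φ₂ x + q x * φ x| ≤ S)
    (h0 : φ a = 0) (h1 : φ₁ a = 0) (h2 : φ₂ a = 0) (hε : 0 < ε) :
    ∀ x ∈ Icc a b,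
      φ₂ x ^ 2 < (ε + (S ^ 2 + ε) * (x - a)) * Real.exp (∫ y in a..x, energyRate p q a y) := by
  set Q := energyRate p q a
  set I := fun x => ∫ y in a..x, Q y
  have hQ : ContinuousOn Q (Icc a b) := hp.energyRate hq a
  have hQ0 : ∀ x ∈ Icc a b, 0 ≤ Q x := fun x hx => energyRate_nonneg (hq0 x hx)
  have hImono : MonotoneOn I (Icc a b) := hQ.monotoneOn_integral_Icc hQ0
  set u := fun x => (ε + (S ^ 2 + ε) * (x - a)) * Real.exp (I x)
  have hu : ∀ x ∈ Icc a b, HasDerivWithinAt u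
      ((S ^ 2 + ε) * Real.exp (I x) + (ε + (S ^ 2 + ε) * (x - a)) * (Real.exp (I x) * Q x))
      (Icc a b) x := fun x hx =>
    ((((hasDerivAt_id x).sub_const a).const_mul (S ^ 2 + ε)).const_add ε).hasDerivWithinAt.mul
      (hQ.hasDerivWithinAt_integral_Icc hx).exp |>.congr_deriv (by simp [I])
  have humono : MonotoneOn u (Icc a b) := by
    refine MonotoneOn.mul (f := fun x => ε + (S ^ 2 + ε) * (x - a)) (g := fun x => Real.exp (I x))
      (fun x _ y _ hxy => by dsimp only; gcongr) (fun x hx y hy hxy => Real.exp_le_exp.2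
        (hImono hx hy hxy)) (fun x hx => ?_) (fun x _ => (Real.exp_pos _).le)
    nlinarith [sq_nonneg S, hx.1]
  refine image_lt_of_deriv_left_lt_deriv_boundary (f' := fun x => 2 * φ₂ x * φ₃ x)
    (fun x hx => (hφ₂ x hx).continuousWithinAt.pow 2)
    (fun x hx => ((hφ₂ x (Ioc_subset_Icc_self hx)).pow 2 |>.congr_deriv (by simp)).mono
      (Icc_subset_Icc_right hx.2))
    (fun x hx => (hu x hx).continuousWithinAt)
    (fun x hx => (hu x (Ioc_subset_Icc_self hx)).mono (Icc_subset_Icc_right hx.2))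
    (by simp [h2, hε]) ?_
  intro x hx hhist _
  have hxI : x ∈ Icc a b := Ioc_subset_Icc_self hx
  have hexp : 1 ≤ Real.exp (I x) := Real.one_le_exp (by
    simpa [I] using hImono (left_mem_Icc.2 (hx.1.le.trans hx.2)) hxI hx.1.le)
  have hS2 : S ^ 2 + ε ≤ (S ^ 2 + ε) * Real.exp (I x) := le_mul_of_one_le_right (by positivity) hexp
  calc 2 * φ₂ x * φ₃ x ≤ Q x * u x + S ^ 2 :=
        two_mul_mul_le_energyRate_mul hφ hφ₁ hq0 hS h0 h1 hxI fun y hy =>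
          (hhist y hy).trans (humono ⟨hy.1, hy.2.trans hx.2⟩ hxI hy.2)
    _ < (S ^ 2 + ε) * Real.exp (I x) + (ε + (S ^ 2 + ε) * (x - a)) * (Real.exp (I x) * Q x) := by
        simp only [u]
        linear_combination hS2 + hε

theorem sq_le_mul_exp_integral_energyRate
    (hφ : ∀ x ∈ Icc a b, HasDerivWithinAt φ (φ₁ x) (Icc a b) x)
    (hφ₁ : ∀ x ∈ Icc a b, HasDerivWithinAt φ₁ (φ₂ x) (Icc a b) x)
    (hφ₂ : ∀ x ∈ Icc a b, HasDerivWithinAt φ₂ (φ₃ x) (Icc a b) x)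
    (hp : ContinuousOn p (Icc a b)) (hq : ContinuousOn q (Icc a b))
    (hq0 : ∀ x ∈ Icc a b, 0 ≤ q x)
    (hS : ∀ x ∈ Icc a b, |φ₃ x + p x * φ₂ x + q x * φ x| ≤ S)
    (h0 : φ a = 0) (h1 : φ₁ a = 0) (h2 : φ₂ a = 0) :
    ∀ x ∈ Icc a b, φ₂ x ^ 2 ≤ S ^ 2 * (b - a) * Real.exp (∫ y in a..b, energyRate p q a y) := by
  intro x hx
  obtain ⟨hax, hxb⟩ := hx
  set I := fun x => ∫ y in a..x, energyRate p q a y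
  have hlim : Tendsto (fun ε => (ε + (S ^ 2 + ε) * (x - a)) * Real.exp (I x)) (𝓝[>] 0)
      (𝓝 (S ^ 2 * (x - a) * Real.exp (I x))) :=
    ((Continuous.tendsto' (by fun_prop) 0 _ (by ring)).mono_left nhdsWithin_le_nhds)
  have hx_le : φ₂ x ^ 2 ≤ S ^ 2 * (x - a) * Real.exp (I x) :=
    ge_of_tendsto hlim <| eventually_nhdsWithin_of_forall fun ε hε =>
      (sq_lt_energy_comparison hφ hφ₁ hφ₂ hp hq hq0 hS h0 h1 h2 hε x ⟨hax, hxb⟩).le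
  have hIx : I x ≤ I b := (hp.energyRate hq a).monotoneOn_integral_Icc
    (fun y hy => energyRate_nonneg (hq0 y hy)) ⟨hax, hxb⟩ ⟨hax.trans hxb, le_rfl⟩ hxb
  have hSba : 0 ≤ S ^ 2 * (b - a) := mul_nonneg (sq_nonneg S) (by linarith)
  calc φ₂ x ^ 2 ≤ S ^ 2 * (x - a) * Real.exp (I x) := hx_le
    _ ≤ S ^ 2 * (b - a) * Real.exp (I b) := by gcongr

end ThirdOrder

theorem sqrt_sq_mul_mul_exp {S d J : ℝ} (hS : 0 ≤ S) (hd : 0 ≤ d) :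
    √(S ^ 2 * d * Real.exp J) = d ^ ((1 : ℝ) / 2) * S * Real.exp (1 / 2 * J) := by
  rw [Real.sqrt_mul (by positivity), Real.sqrt_mul (sq_nonneg S), Real.sqrt_sq hS,
    ← Real.exp_half, Real.sqrt_eq_rpow, one_div_mul_eq_div]
  ring

theorem stmt_5_general (xl xr : ℝ) (φ F₀ r : ℝ → ℝ)
    (hφ : ContDiff ℝ 3 φ) (hF₀ : ContDiff ℝ 2 F₀) (hr : ContinuousOn r (Icc xl xr))
    (hF₀''pos : ∀ x ∈ Icc xl xr, 0 ≤ deriv^[2] F₀ x)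
    (hODE : ∀ x ∈ Icc xl xr,
      deriv^[3] φ x + F₀ x * deriv^[2] φ x + deriv^[2] F₀ x * φ x = r x)
    (h0 : φ xl = 0) (h1 : deriv φ xl = 0) (h2 : deriv^[2] φ xl = 0) :
    ∀ x ∈ Icc xl xr,
      |deriv^[2] φ x| ≤
        (xr - xl) ^ ((1 : ℝ) / 2) * sSup ((fun y => |r y|) '' Icc xl xr) *
        Real.exp ((1 / 2) * ∫ y in xl..xr,
          if deriv^[2] F₀ y - 2 * F₀ y + 1 ≥ 0 then
            deriv^[2] F₀ y - 2 * F₀ y + 1 + ((y - xl) ^ 4 / 4) * deriv^[2] F₀ y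
          else ((y - xl) ^ 4 / 4) * deriv^[2] F₀ y) := by
  intro x hx
  set S := sSup ((fun y => |r y|) '' Icc xl xr)
  have hS : ∀ y ∈ Icc xl xr, |r y| ≤ S := fun y hy =>
    le_csSup (isCompact_Icc.image_of_continuousOn hr.abs).bddAbove (mem_image_of_mem _ hy)
  have hderiv (k : ℕ) (hk : k < 3) (y : ℝ) (_ : y ∈ Icc xl xr) :
      HasDerivWithinAt (deriv^[k] φ) (deriv^[k + 1] φ y) (Icc xl xr) y :=
    (hφ.hasDerivAt_iterate_deriv hk y).hasDerivWithinAt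
  have hbound := sq_le_mul_exp_integral_energyRate (hderiv 0 (by norm_num))
    (hderiv 1 (by norm_num)) (hderiv 2 (by norm_num)) hF₀.continuous.continuousOn
    (hF₀.iterate_deriv' 0 2).continuous.continuousOn hF₀''pos
    (fun y hy => (hODE y hy).symm ▸ hS y hy) h0 h1 h2 x hx
  simp only [← energyRate_eq_ite]
  rw [← sqrt_sq_mul_mul_exp ((abs_nonneg _).trans (hS x hx)) (sub_nonneg.2 (hx.1.trans hx.2))]
  exact Real.abs_le_sqrt hbound

/-- Energy bound for the inhomogeneous problem with zero initial data:
`sup |φ''| ≤ (x_r - x_l)^{1/2} · sup|r| · exp((1/2)∫ Q)`. -/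
theorem stmt_5 (xl xr : ℝ) (hx : xl ≤ xr) (φ F₀ r : ℝ → ℝ)
    (hφ : ContDiff ℝ 3 φ) (hF₀ : ContDiff ℝ 2 F₀) (hr : ContinuousOn r (Icc xl xr))
    (hF₀pos : ∀ x ∈ Icc xl xr, 0 ≤ F₀ x)
    (hF₀''pos : ∀ x ∈ Icc xl xr, 0 ≤ deriv^[2] F₀ x)
    (hODE : ∀ x ∈ Icc xl xr,
      deriv^[3] φ x + F₀ x * deriv^[2] φ x + deriv^[2] F₀ x * φ x = r x)
    (h0 : φ xl = 0) (h1 : deriv φ xl = 0) (h2 : deriv^[2] φ xl = 0) :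
    ∀ x ∈ Icc xl xr,
      |deriv^[2] φ x| ≤
        (xr - xl) ^ ((1 : ℝ) / 2) * sSup ((fun y => |r y|) '' Icc xl xr) *
        Real.exp ((1 / 2) * ∫ y in xl..xr,
          if deriv^[2] F₀ y - 2 * F₀ y + 1 ≥ 0 then
            deriv^[2] F₀ y - 2 * F₀ y + 1 + ((y - xl) ^ 4 / 4) * deriv^[2] F₀ y
          else ((y - xl) ^ 4 / 4) * deriv^[2] F₀ y) :=
  stmt_5_general xl xr φ F₀ r hφ hF₀ hr hF₀''pos hODE h0 h1 h2
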